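/- Fix 0 < θ < 1 and let k = n^θ, m = c·k·log(n/k) with c·log 2 = 1 + ε for some ε > 0. Then the sum over 0 ≤ ℓ ≤ k(1 - 1/log n) of (Δk)^{3/2} · (e²·(k/n)^{c log 2 - 1 + o(1)}/(1-ℓ/k)²)^{(1-ℓ/k)·k} tends to 0 as n → ∞, where Δ = Θ(log n). -/

import Mathlib

/-!
For large `n`, the range condition gives `β := 1 - ℓ / k ≥ 1 / log n`, while
`(k / n) ^ (c log 2 - 1 + η n) ≤ n ^ (-(1 - θ) ε / 2)` beats `log² n`. Hence the base
`e² (k / n) ^ (…) / β²` is at most `e⁻¹` and every summand is at most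
`(Δ k) ^ (3/2) exp (-k / log n)`.
As `Δ = O(log n) ≤ n` and `k / log n ≥ n ^ (θ / 2)`, the `k` summands together are at most
`n⁴ exp (-n ^ (θ / 2)) → 0`.
-/

open Filter Finset Real Topology

lemma eventually_log_pow_le_mul_rpow (m : ℕ) {s c : ℝ} (hs : 0 < s) (hc : 0 < c) :
    ∀ᶠ x : ℝ in atTop, log x ^ m ≤ c * x ^ s := by
  filter_upwards [(isLittleO_log_rpow_rpow_atTop m hs).bound hc, eventually_ge_atTop 0]
    with x hx hx0
  rw [rpow_natCast, norm_of_nonneg (rpow_nonneg hx0 s)] at hx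
  exact (le_abs_self _).trans hx

lemma tendsto_rpow_mul_exp_neg_rpow_atTop_nhds_zero (s : ℝ) {r : ℝ} (hr : 0 < r) :
    Tendsto (fun x : ℝ => x ^ s * exp (-x ^ r)) atTop (𝓝 0) := by
  refine ((tendsto_rpow_mul_exp_neg_mul_atTop_nhds_zero (s / r) 1 one_pos).comp
    (tendsto_rpow_atTop hr)).congr' ?_
  filter_upwards [eventually_ge_atTop 0] with x hx
  simp only [Function.comp, ← rpow_mul hx, mul_div_cancel₀ s hr.ne', neg_one_mul]

lemma div_sq_rpow_mul_le_exp {a β K L : ℝ} (ha : 0 ≤ a) (hL : 0 < L) (hβ : 1 / L ≤ β)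
    (hK : 0 ≤ K) (haL : a * L ^ 2 ≤ exp (-1)) :
    (a / β ^ 2) ^ (β * K) ≤ exp (-(K / L)) := by
  have hβ0 : 0 < β := (one_div_pos.2 hL).trans_le hβ
  have hbase : a / β ^ 2 ≤ exp (-1) :=
    calc a / β ^ 2 ≤ a / (1 / L) ^ 2 := by gcongr
      _ = a * L ^ 2 := by field_simp
      _ ≤ exp (-1) := haL
  calc (a / β ^ 2) ^ (β * K) ≤ exp (-1) ^ (β * K) := by gcongr
    _ = exp (-(β * K)) := by rw [← exp_mul, neg_one_mul]
    _ ≤ exp (-(K / L)) := by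
      gcongr
      calc K / L = 1 / L * K := by ring
        _ ≤ β * K := by gcongr

lemma ite_mul_div_sq_rpow_le_mul_exp {D K L a t : ℝ} (hD : 0 ≤ D) (hK : 0 < K) (hL : 0 < L)
    (ha : 0 ≤ a) (haL : a * L ^ 2 ≤ exp (-1)) :
    (if t ≤ K * (1 - 1 / L) then D * (a / (1 - t / K) ^ 2) ^ ((1 - t / K) * K) else 0)
      ≤ D * exp (-(K / L)) := by
  split_ifs with ht
  · have hβ : 1 / L ≤ 1 - t / K := by
      rw [le_sub_comm, div_le_iff₀ hK]; linarith
    gcongr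
    exact div_sq_rpow_mul_le_exp ha hL hβ hK.le haL
  · positivity

lemma natFloor_rpow_le_self {θ x : ℝ} (hθ : θ ≤ 1) (hx : 1 ≤ x) :
    (⌊x ^ θ⌋₊ : ℝ) ≤ x :=
  (Nat.floor_le (by positivity)).trans (by simpa using rpow_le_rpow_of_exponent_le hx hθ)

lemma eventually_rpow_mul_log_le_natFloor_rpow {θ : ℝ} (hθ : 0 < θ) :
    ∀ᶠ x : ℝ in atTop, x ^ (θ / 2) * log x ≤ ⌊x ^ θ⌋₊ := by
  filter_upwards [eventually_log_pow_le_mul_rpow 1 (half_pos hθ) one_half_pos,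
    (tendsto_rpow_atTop hθ).eventually_ge_atTop 2, eventually_ge_atTop 0] with x hlog hx2 hx0
  have hsq : x ^ (θ / 2) * x ^ (θ / 2) = x ^ θ := by
    rw [← rpow_add' hx0 (by positivity)]; ring_nf
  calc x ^ (θ / 2) * log x ≤ x ^ (θ / 2) * (1 / 2 * x ^ (θ / 2)) := by
        rw [pow_one] at hlog; gcongr
    _ ≤ x ^ θ - 1 := by linarith
    _ ≤ ⌊x ^ θ⌋₊ := (Nat.sub_one_lt_floor _).le

lemma eventually_sq_exp_mul_natFloor_rpow_div_rpow_mul_sq_log_le {θ δ : ℝ} (hθ : θ < 1)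
    (hδ : 0 < δ) :
    ∀ᶠ x : ℝ in atTop, ∀ y, δ ≤ y →
      exp 1 ^ 2 * ((⌊x ^ θ⌋₊ : ℝ) / x) ^ y * log x ^ 2 ≤ exp (-1) := by
  have hγ : 0 < (1 - θ) * δ := by nlinarith
  filter_upwards [eventually_log_pow_le_mul_rpow 2 hγ (exp_pos (-3)), eventually_ge_atTop 1]
    with x hlog hx1 y hy
  have hx0 : 0 < x := by linarith
  have hu1 : (⌊x ^ θ⌋₊ : ℝ) / x ≤ 1 :=
    (div_le_one hx0).2 (natFloor_rpow_le_self hθ.le hx1)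
  have hu : ((⌊x ^ θ⌋₊ : ℝ) / x) ^ y ≤ x ^ (-((1 - θ) * δ)) :=
    calc ((⌊x ^ θ⌋₊ : ℝ) / x) ^ y ≤ ((⌊x ^ θ⌋₊ : ℝ) / x) ^ δ :=
          rpow_le_rpow_of_exponent_ge' (by positivity) hu1 hδ.le hy
      _ ≤ (x ^ θ / x) ^ δ := by gcongr; exact Nat.floor_le (by positivity)
      _ = x ^ (-((1 - θ) * δ)) := by
        rw [← rpow_sub_one hx0.ne', ← rpow_mul hx0.le]; ring_nf
  calc exp 1 ^ 2 * ((⌊x ^ θ⌋₊ : ℝ) / x) ^ y * log x ^ 2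
      ≤ exp 1 ^ 2 * x ^ (-((1 - θ) * δ)) * (exp (-3) * x ^ ((1 - θ) * δ)) := by gcongr
    _ = exp (-1) := by
      have hpos : x ^ ((1 - θ) * δ) ≠ 0 := (rpow_pos_of_pos hx0 _).ne'
      rw [rpow_neg hx0.le, ← exp_nat_mul, mul_comm (exp (-3)), ← mul_assoc,
        mul_assoc _ _ (x ^ _), inv_mul_cancel₀ hpos, mul_one, ← exp_add]
      norm_num

lemma eventually_natFloor_rpow_mul_rpow_mul_exp_le {θ : ℝ} (hθ0 : 0 < θ) (hθ1 : θ < 1)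
    (C : ℝ) :
    ∀ᶠ x : ℝ in atTop, ∀ D, 0 ≤ D → D ≤ C * log x →
      (⌊x ^ θ⌋₊ : ℝ) * ((D * ⌊x ^ θ⌋₊) ^ ((3 : ℝ) / 2) * exp (-(⌊x ^ θ⌋₊ / log x)))
        ≤ x ^ (4 : ℝ) * exp (-x ^ (θ / 2)) := by
  filter_upwards [eventually_rpow_mul_log_le_natFloor_rpow hθ0,
    (isLittleO_log_id_atTop.const_mul_left C).bound one_pos, eventually_gt_atTop 1]
    with x hK hlog hx1 D hD0 hD
  have hx0 : 0 < x := by linarith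
  have hL : 0 < log x := log_pos hx1
  have hKx : (⌊x ^ θ⌋₊ : ℝ) ≤ x := natFloor_rpow_le_self hθ1.le hx1.le
  have hDx : D ≤ x := by
    rw [one_mul, id, norm_of_nonneg hx0.le] at hlog
    exact hD.trans ((le_abs_self _).trans hlog)
  have hDK : D * ⌊x ^ θ⌋₊ ≤ x ^ (2 : ℝ) := by
    rw [rpow_two, sq]; gcongr
  calc _ ≤ x ^ (1 : ℝ) * ((x ^ (2 : ℝ)) ^ ((3 : ℝ) / 2) * exp (-x ^ (θ / 2))) := by
        rw [rpow_one]
        gcongr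
        exact (le_div_iff₀ hL).2 hK
    _ = x ^ (4 : ℝ) * exp (-x ^ (θ / 2)) := by
        rw [← rpow_mul hx0.le, ← mul_assoc, ← rpow_add hx0]; norm_num

/-- Final summation step of the small-overlap first-moment bound: with `k = n^θ`,
`Δ = Θ(log n)` and `c log 2 = 1 + ε`, the sum over `0 ≤ ℓ ≤ k (1 - 1/log n)` of
`(Δ k)^{3/2} (e² (k/n)^{c log 2 - 1 + o(1)} / (1 - ℓ/k)²)^{(1 - ℓ/k) k}` tends to `0`. -/
theorem stmt16 (θ ε c : ℝ) (hθ0 : 0 < θ) (hθ1 : θ < 1) (hε : 0 < ε)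
    (hc : c * Real.log 2 = 1 + ε)
    (k Δ : ℕ → ℕ) (hk : ∀ n, k n = ⌊(n : ℝ) ^ θ⌋₊)
    (hΔ : ∃ C₁ C₂ : ℝ, 0 < C₁ ∧ 0 < C₂ ∧ ∀ᶠ n : ℕ in atTop,
        C₁ * Real.log n ≤ (Δ n : ℝ) ∧ (Δ n : ℝ) ≤ C₂ * Real.log n)
    (η : ℕ → ℝ) (hη : Tendsto η atTop (nhds 0)) :
    Tendsto (fun n : ℕ => ∑ ℓ ∈ Finset.range (k n),
        (if (ℓ : ℝ) ≤ (k n : ℝ) * (1 - 1 / Real.log n) then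
          ((Δ n * k n : ℝ)) ^ ((3 : ℝ)/2) *
            ((Real.exp 1) ^ 2 * ((k n : ℝ) / n) ^ (c * Real.log 2 - 1 + η n)
              / (1 - (ℓ : ℝ) / k n) ^ 2) ^ ((1 - (ℓ : ℝ) / k n) * (k n : ℝ))
        else 0)) atTop (nhds 0) := by
  obtain rfl : k = fun n : ℕ => ⌊(n : ℝ) ^ θ⌋₊ := funext hk
  obtain ⟨_, C, -, -, hΔ⟩ := hΔ
  have hexp : ∀ᶠ n in atTop, ε / 2 ≤ c * log 2 - 1 + η n := by
    filter_upwards [hη.eventually (eventually_ge_nhds (neg_lt_zero.2 (half_pos hε)))]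
      with n hn
    linarith
  have hnat := @tendsto_natCast_atTop_atTop ℝ _ _
  refine squeeze_zero'
    (.of_forall fun n => sum_nonneg fun ℓ _ => by split_ifs <;> positivity) ?_
    ((tendsto_rpow_mul_exp_neg_rpow_atTop_nhds_zero 4 (half_pos hθ0)).comp hnat)
  filter_upwards [hexp, hΔ, hnat.eventually_gt_atTop 1,
    hnat.eventually (eventually_rpow_mul_log_le_natFloor_rpow hθ0),
    hnat.eventually
      (eventually_sq_exp_mul_natFloor_rpow_div_rpow_mul_sq_log_le hθ1 (half_pos hε)),
    hnat.eventually (eventually_natFloor_rpow_mul_rpow_mul_exp_le hθ0 hθ1 C)]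
    with n hy hΔn hn hK hbase hbound
  have hL : 0 < log n := log_pos hn
  have hK0 : 0 < (⌊(n : ℝ) ^ θ⌋₊ : ℝ) := lt_of_lt_of_le (by positivity) hK
  calc _ ≤ ∑ _ℓ ∈ range ⌊(n : ℝ) ^ θ⌋₊,
        (Δ n * ⌊(n : ℝ) ^ θ⌋₊ : ℝ) ^ ((3 : ℝ) / 2) * exp (-(⌊(n : ℝ) ^ θ⌋₊ / log n)) :=
        sum_le_sum fun ℓ _ => ite_mul_div_sq_rpow_le_mul_exp (by positivity) hK0 hL
          (by positivity) (hbase _ hy)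
    _ ≤ _ := by
      rw [sum_const, card_range, nsmul_eq_mul]
      exact hbound _ (by positivity) hΔn.2
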